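/- arXiv:math/0009033 — 3 statements merged into one kernel-verified Lean document; each statement's English description precedes it below -/
import Mathlib

section
/- Let K be a finite field of odd characteristic p, let G be a finite p-group, and let I denote the augmentation ideal of KG and SK(I) = {x ∈ I : x* = -x}. Then the map k ↦ (1-k)(1+k)⁻¹ is a bijection from SK(I) onto V_*(KG); in particular, for every u ∈ V_*(KG) the element 1 + u is invertible, k = (1-u)(1+u)⁻¹ lies in SK(I), and u = (1-k)(1+k)⁻¹ = -1 + 2(1+k)⁻¹. -/
/-- The augmentation homomorphism `χ : KG → K`. -/
noncomputable def aug (K G : Type*) [CommSemiring K] [Group G] :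
    MonoidAlgebra K G →ₐ[K] K :=
  MonoidAlgebra.lift K K G 1

/-- The `K`-linear anti-automorphism of `KG` determined by `g ↦ g⁻¹`. -/
noncomputable def gstar {K G : Type*} [CommSemiring K] [Group G]
    (x : MonoidAlgebra K G) : MonoidAlgebra K G :=
  MonoidAlgebra.ofCoeff (Finsupp.mapDomain (fun g : G => g⁻¹) x.coeff)

open MonoidAlgebra Finsupp

section RinvHelpers

variable {R : Type*} [MonoidWithZero R]

theorem rinv_eq {a b : R} (h1 : a * b = 1) (h2 : b * a = 1) : Ring.inverse a = b :=
  Ring.inverse_unit (⟨a, b, h1, h2⟩ : Rˣ)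

theorem commute_rinv_left {a b : R} (h : Commute a b) : Commute (Ring.inverse a) b := by
  by_cases ha : IsUnit a
  · obtain ⟨u, rfl⟩ := ha
    rw [Ring.inverse_unit]
    exact h.units_inv_left
  · rw [Ring.inverse_non_unit _ ha]
    exact Commute.zero_left _

theorem rinv_mul_rev {a b : R} (ha : IsUnit a) (hb : IsUnit b) :
    Ring.inverse (a * b) = Ring.inverse b * Ring.inverse a := by
  apply rinv_eq
  · rw [mul_assoc, ← mul_assoc b, Ring.mul_inverse_cancel _ hb, one_mul,
      Ring.mul_inverse_cancel _ ha]
  · rw [mul_assoc, ← mul_assoc (Ring.inverse a), Ring.inverse_mul_cancel _ ha, one_mul,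
      Ring.inverse_mul_cancel _ hb]

theorem rinv_rinv {a : R} (ha : IsUnit a) : Ring.inverse (Ring.inverse a) = a :=
  rinv_eq (Ring.inverse_mul_cancel _ ha) (Ring.mul_inverse_cancel _ ha)

theorem isUnit_rinv {a : R} (ha : IsUnit a) : IsUnit (Ring.inverse a) := by
  obtain ⟨u, rfl⟩ := ha
  rw [Ring.inverse_unit]
  exact u⁻¹.isUnit

end RinvHelpers

section GstarHelpers

variable {K G : Type*} [CommRing K] [Group G]

theorem gstar_single (g : G) (a : K) :
    gstar (MonoidAlgebra.single g a) = MonoidAlgebra.single g⁻¹ a :=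
  MonoidAlgebra.mapDomain_single (f := fun g : G => g⁻¹)

theorem gstar_add (x y : MonoidAlgebra K G) : gstar (x + y) = gstar x + gstar y :=
  MonoidAlgebra.mapDomain_add (fun g : G => g⁻¹) x y

theorem gstar_zero : gstar (0 : MonoidAlgebra K G) = 0 := MonoidAlgebra.mapDomain_zero (fun g : G => g⁻¹)

theorem gstar_one : gstar (1 : MonoidAlgebra K G) = 1 := by
  have : (1 : MonoidAlgebra K G) = MonoidAlgebra.single 1 1 := rfl
  rw [this, gstar_single, inv_one]

theorem gstar_neg (x : MonoidAlgebra K G) : gstar (-x) = -gstar x := by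
  have : gstar (-x) + gstar x = 0 := by rw [← gstar_add, neg_add_cancel, gstar_zero]
  exact eq_neg_of_add_eq_zero_left this

theorem gstar_sub (x y : MonoidAlgebra K G) : gstar (x - y) = gstar x - gstar y := by
  rw [sub_eq_add_neg, gstar_add, gstar_neg, sub_eq_add_neg]

theorem gstar_mul (x y : MonoidAlgebra K G) : gstar (x * y) = gstar y * gstar x := by
  induction x using MonoidAlgebra.induction_linear with
  | zero => simp [gstar_zero]
  | add a b ha hb => rw [add_mul, gstar_add, gstar_add, mul_add, ha, hb]
  | single g a =>
    induction y using MonoidAlgebra.induction_linear with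
    | zero => simp [gstar_zero]
    | add c d hc hd => rw [mul_add, gstar_add, gstar_add, add_mul, hc, hd]
    | single h b =>
      rw [MonoidAlgebra.single_mul_single, gstar_single, gstar_single, gstar_single,
        MonoidAlgebra.single_mul_single, mul_inv_rev, mul_comm a b]

theorem gstar_rinv {x : MonoidAlgebra K G} (hx : IsUnit x) :
    gstar (Ring.inverse x) = Ring.inverse (gstar x) := by
  symm
  apply rinv_eq
  · rw [← gstar_mul, Ring.inverse_mul_cancel _ hx, gstar_one]
  · rw [← gstar_mul, Ring.mul_inverse_cancel _ hx, gstar_one]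

end GstarHelpers

section AugHelpers

variable {K G : Type*} [CommSemiring K] [Group G]

theorem aug_single (g : G) (a : K) : aug K G (MonoidAlgebra.single g a) = a := by
  simp [aug, MonoidAlgebra.lift_single]

end AugHelpers

section SpanHelpers

variable {K G : Type*} [CommRing K] [Group G]

theorem commute_single_center {z : G} (hz : z ∈ Subgroup.center G) (c : K)
    (y : MonoidAlgebra K G) : Commute (MonoidAlgebra.single z c) y := by
  induction y using MonoidAlgebra.induction with
  | zero => exact Commute.zero_right _
  | single_add g a f hgf ha0 ih =>
    refine Commute.add_right ?_ ih
    show MonoidAlgebra.single z c * MonoidAlgebra.single g a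
        = MonoidAlgebra.single g a * MonoidAlgebra.single z c
    rw [MonoidAlgebra.single_mul_single, MonoidAlgebra.single_mul_single,
      ← Subgroup.mem_center_iff.mp hz g, mul_comm c a]

theorem pow_sub_mem_span {z : G} (hz : z ∈ Subgroup.center G) :
    ∀ (n : ℕ) (a : K), (MonoidAlgebra.single (z ^ n) a - MonoidAlgebra.single 1 a :
      MonoidAlgebra K G) ∈ Ideal.span {(MonoidAlgebra.single z 1 : MonoidAlgebra K G) - 1}
  | 0, a => by simp
  | n + 1, a => by
    have h1 : (MonoidAlgebra.single z (1 : K) : MonoidAlgebra K G)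
        * MonoidAlgebra.single (z ^ n) a = MonoidAlgebra.single (z ^ (n + 1)) a := by
      rw [MonoidAlgebra.single_mul_single, one_mul, ← pow_succ']
    have h2 : (MonoidAlgebra.single (1 : G) a : MonoidAlgebra K G)
        * MonoidAlgebra.single z 1 = MonoidAlgebra.single z a := by
      rw [MonoidAlgebra.single_mul_single, one_mul, mul_one]
    have h3 : (MonoidAlgebra.single z (1 : K) : MonoidAlgebra K G)
        * MonoidAlgebra.single 1 a = MonoidAlgebra.single z a := by
      rw [MonoidAlgebra.single_mul_single, mul_one, one_mul]
    have e1 : (MonoidAlgebra.single (z ^ (n + 1)) a - MonoidAlgebra.single 1 a :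
        MonoidAlgebra K G)
        = MonoidAlgebra.single z (1 : K)
            * (MonoidAlgebra.single (z ^ n) a - MonoidAlgebra.single 1 a)
          + MonoidAlgebra.single (1 : G) a
            * ((MonoidAlgebra.single z 1 : MonoidAlgebra K G) - 1) := by
      rw [mul_sub, mul_sub, h1, h2, h3, mul_one]
      abel
    rw [e1]
    exact Ideal.add_mem _ (Ideal.mul_mem_left _ _ (pow_sub_mem_span hz n a))
      (Ideal.mul_mem_left _ _ (Ideal.subset_span (Set.mem_singleton _)))

theorem sub_single_one_mem_span [Finite G] {z : G} (hz : z ∈ Subgroup.center G)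
    {h : G} (hh : h ∈ Subgroup.zpowers z) (a : K) :
    (MonoidAlgebra.single h a - MonoidAlgebra.single 1 a : MonoidAlgebra K G)
      ∈ Ideal.span {(MonoidAlgebra.single z 1 : MonoidAlgebra K G) - 1} := by
  obtain ⟨n, rfl⟩ := mem_powers_iff_mem_zpowers.mpr hh
  exact pow_sub_mem_span hz n a

theorem ma_mapDomain_add {H : Type*} (r : G → H) (x y : MonoidAlgebra K G) :
    MonoidAlgebra.mapDomain r (x + y)
      = MonoidAlgebra.mapDomain r x + MonoidAlgebra.mapDomain r y :=
  MonoidAlgebra.mapDomain_add r x y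

theorem ma_mapDomain_single {H : Type*} (r : G → H) (g : G) (a : K) :
    MonoidAlgebra.mapDomain r (MonoidAlgebra.single g a) = MonoidAlgebra.single (r g) a :=
  MonoidAlgebra.mapDomain_single

theorem mem_span_of_mapDomain_zero [Finite G] {z : G} (hz : z ∈ Subgroup.center G)
    (y : MonoidAlgebra K G)
    (hy : MonoidAlgebra.mapDomain (QuotientGroup.mk (s := Subgroup.zpowers z)) y = 0) :
    y ∈ Ideal.span {(MonoidAlgebra.single z 1 : MonoidAlgebra K G) - 1} := by
  set N := Subgroup.zpowers z with hNdef
  set r : G → G := fun g => (QuotientGroup.mk g : G ⧸ N).out with hrdef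
  have key : ∀ w : MonoidAlgebra K G,
      w - MonoidAlgebra.mapDomain r w
        ∈ Ideal.span {(MonoidAlgebra.single z 1 : MonoidAlgebra K G) - 1} := by
    intro w
    induction w using MonoidAlgebra.induction with
    | zero => simp
    | single_add g a f hgf ha0 ih =>
      rw [ma_mapDomain_add, ma_mapDomain_single, add_sub_add_comm]
      refine Ideal.add_mem _ ?_ ih
      have hfac : (MonoidAlgebra.single g a - MonoidAlgebra.single (r g) a : MonoidAlgebra K G)
          = MonoidAlgebra.single (r g) (1 : K)
            * (MonoidAlgebra.single ((r g)⁻¹ * g) a - MonoidAlgebra.single 1 a) := by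
        rw [mul_sub, MonoidAlgebra.single_mul_single, MonoidAlgebra.single_mul_single,
          mul_inv_cancel_left, mul_one, one_mul]
      rw [hfac]
      refine Ideal.mul_mem_left _ _ (sub_single_one_mem_span hz ?_ a)
      exact QuotientGroup.eq.mp (QuotientGroup.out_eq' (QuotientGroup.mk g : G ⧸ N))
  have h0 : MonoidAlgebra.mapDomain r y = 0 := by
    have hcomp : r = (Quotient.out ∘ (QuotientGroup.mk : G → G ⧸ N)) := rfl
    show MonoidAlgebra.ofCoeff (Finsupp.mapDomain r y.coeff) = 0
    rw [hcomp, Finsupp.mapDomain_comp]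
    show MonoidAlgebra.ofCoeff (Finsupp.mapDomain _
      (MonoidAlgebra.mapDomain (QuotientGroup.mk (s := N)) y).coeff) = 0
    rw [hy]
    simp
  have hk := key y
  rwa [h0, sub_zero] at hk

end SpanHelpers

theorem aug_zero_nilpotent {K : Type*} [Field K] (p : ℕ) (hp : p.Prime) [CharP K p]
    (n : ℕ) : ∀ (G : Type*) (_ : Group G) (_ : Fintype G), Fintype.card G = n →
      IsPGroup p G → ∀ x : MonoidAlgebra K G, aug K G x = 0 → IsNilpotent x := by
  haveI := Fact.mk hp
  induction n using Nat.strong_induction_on with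
  | _ n ih =>
    intro G _ _ hcard hG x hx
    rcases le_or_gt n 1 with h1 | h1
    · haveI : Subsingleton G := by
        rw [← Fintype.card_le_one_iff_subsingleton, hcard]; exact h1
      obtain ⟨c, rfl⟩ : ∃ c, x = MonoidAlgebra.single (1 : G) c :=
        ⟨x.coeff 1, by ext g; rw [Subsingleton.elim g (1 : G)]; simp⟩
      rw [aug_single] at hx
      exact ⟨1, by simp [hx]⟩
    · haveI : Nontrivial G := Fintype.one_lt_card_iff_nontrivial.mp (hcard ▸ h1)
      have hcenter : IsPGroup p (Subgroup.center G) := hG.to_subgroup _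
      haveI : Nontrivial (Subgroup.center G) := hG.center_nontrivial
      obtain ⟨m, hm0, hmcard⟩ := hcenter.nontrivial_iff_card.mp inferInstance
      have hdvd : p ∣ Nat.card (Subgroup.center G) := hmcard ▸ dvd_pow_self p hm0.ne'
      obtain ⟨zc, hzc⟩ := exists_prime_orderOf_dvd_card' p hdvd
      have hz : (zc : G) ∈ Subgroup.center G := zc.2
      have hordz : orderOf (zc : G) = p := (Subgroup.orderOf_coe zc).trans hzc
      set z : G := (zc : G) with hzdef
      set N := Subgroup.zpowers z with hNdef
      have hle : N ≤ Subgroup.center G := Subgroup.zpowers_le.mpr hz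
      haveI hN : N.Normal := by
        constructor
        intro a ha g
        have h := Subgroup.mem_center_iff.mp (hle ha) g
        rw [h, mul_inv_cancel_right]
        exact ha
      haveI : Fintype (G ⧸ N) := Fintype.ofFinite _
      have hcardQ : Fintype.card (G ⧸ N) < n := by
        have hlag := Subgroup.card_eq_card_quotient_mul_card_subgroup N
        rw [Nat.card_eq_fintype_card, Nat.card_eq_fintype_card, Nat.card_zpowers, hordz,
          hcard] at hlag
        have hpos : 0 < Fintype.card (G ⧸ N) := Fintype.card_pos
        have h2p : 2 ≤ p := hp.two_le
        nlinarith
      have hGQ : IsPGroup p (G ⧸ N) := hG.to_quotient N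
      set φ := MonoidAlgebra.mapDomainAlgHom K K (QuotientGroup.mk' N) with hφdef
      have haug : aug K (G ⧸ N) (φ x) = 0 := by
        have hcomp : (aug K (G ⧸ N)).comp φ = aug K G := by
          apply MonoidAlgebra.algHom_ext
          intro a
          simp [hφdef, aug, MonoidAlgebra.lift_single]
          exact Subsingleton.elim _ _
        calc aug K (G ⧸ N) (φ x) = ((aug K (G ⧸ N)).comp φ) x := rfl
          _ = aug K G x := by rw [hcomp]
          _ = 0 := hx
      obtain ⟨m', hm'⟩ := ih _ hcardQ (G ⧸ N) inferInstance inferInstance rfl hGQ (φ x) haug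
      have hker : φ (x ^ (m' + 1)) = 0 := by
        rw [map_pow, pow_succ, hm', zero_mul]
      have hker' : MonoidAlgebra.mapDomain (QuotientGroup.mk (s := N)) (x ^ (m' + 1)) = 0 := by
        have : φ (x ^ (m' + 1))
            = MonoidAlgebra.mapDomain (QuotientGroup.mk (s := N)) (x ^ (m' + 1)) := by
          simp only [hφdef, MonoidAlgebra.mapDomainAlgHom, MonoidAlgebra.mapDomainRingHom,
            AlgHom.coe_mk, RingHom.coe_mk, MonoidHom.coe_mk, OneHom.coe_mk, AddMonoidHom.coe_mk,
            Finsupp.mapDomain.addMonoidHom_apply, QuotientGroup.coe_mk']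
        rwa [this] at hker
      have hspan := mem_span_of_mapDomain_zero hz _ hker'
      obtain ⟨w, hw⟩ := Ideal.mem_span_singleton'.mp hspan
      refine ⟨(m' + 1) * p, ?_⟩
      rw [pow_mul, ← hw]
      have hcomm : Commute w ((MonoidAlgebra.single z 1 : MonoidAlgebra K G) - 1) :=
        ((commute_single_center hz 1 w).sub_left (Commute.one_left w)).symm
      rw [hcomm.mul_pow]
      haveI : CharP (MonoidAlgebra K G) p := charP_of_injective_algebraMap' K p
      have hsz : ((MonoidAlgebra.single z 1 : MonoidAlgebra K G) - 1) ^ p = 0 := by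
        rw [sub_pow_char_of_commute _ (Commute.one_right _), MonoidAlgebra.single_pow,
          one_pow, ← hordz, pow_orderOf_eq_one, one_pow, ← MonoidAlgebra.one_def, sub_self]
      rw [hsz, mul_zero]

section CayleyHelpers

variable {R : Type*} [Ring R]

theorem sum_helper (a w : R) (hw : (1 + a) * w = 1) : 1 + (1 - a) * w = 2 * w := by
  have h2 : (1 + a) + (1 - a) = (2 : R) := by rw [← one_add_one_eq_two]; abel
  calc 1 + (1 - a) * w = (1 + a) * w + (1 - a) * w := by rw [hw]
    _ = ((1 + a) + (1 - a)) * w := (add_mul _ _ _).symm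
    _ = 2 * w := by rw [h2]

theorem diff_helper (a w : R) (hw : (1 + a) * w = 1) : 1 - (1 - a) * w = (2 * a) * w := by
  have h2 : (1 + a) - (1 - a) = (2 : R) * a := by rw [two_mul]; abel
  calc 1 - (1 - a) * w = (1 + a) * w - (1 - a) * w := by rw [hw]
    _ = ((1 + a) - (1 - a)) * w := (sub_mul _ _ _).symm
    _ = (2 * a) * w := by rw [h2]

end CayleyHelpers

/-- the Cayley map `k ↦ (1 - k)(1 + k)⁻¹` is a bijection from the set `SK(I)`
of skew-symmetric elements of the augmentation ideal onto the unitary subgroup `V_*(KG)`;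
moreover for every `u ∈ V_*(KG)` the element `1 + u` is invertible,
`k = (1 - u)(1 + u)⁻¹` lies in `SK(I)`, and `u = (1 - k)(1 + k)⁻¹ = -1 + 2(1 + k)⁻¹`. -/
theorem stmt2 (K G : Type*) [Field K] [Fintype K] [Group G] [Fintype G]
    (p : ℕ) (hp : p.Prime) (hodd : Odd p) [CharP K p] (hG : IsPGroup p G) :
    Set.BijOn (fun k : MonoidAlgebra K G => (1 - k) * Ring.inverse (1 + k))
      {k : MonoidAlgebra K G | aug K G k = 0 ∧ gstar k = -k}
      {u : MonoidAlgebra K G | IsUnit u ∧ aug K G u = 1 ∧ gstar u = Ring.inverse u} ∧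
    (∀ u : MonoidAlgebra K G, IsUnit u → aug K G u = 1 → gstar u = Ring.inverse u →
      IsUnit (1 + u) ∧
      (aug K G ((1 - u) * Ring.inverse (1 + u)) = 0 ∧
        gstar ((1 - u) * Ring.inverse (1 + u)) = -((1 - u) * Ring.inverse (1 + u))) ∧
      u = (1 - (1 - u) * Ring.inverse (1 + u)) *
            Ring.inverse (1 + (1 - u) * Ring.inverse (1 + u)) ∧
      u = -1 + 2 * Ring.inverse (1 + (1 - u) * Ring.inverse (1 + u))) := by
  classical
  haveI := Fact.mk hp
  have nilp : ∀ x : MonoidAlgebra K G, aug K G x = 0 → IsNilpotent x :=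
    aug_zero_nilpotent p hp _ G inferInstance inferInstance rfl hG
  have unit_of_aug : ∀ y : MonoidAlgebra K G, aug K G y ≠ 0 → IsUnit y := by
    intro y hy
    have h1 : aug K G ((aug K G y)⁻¹ • y - 1) = 0 := by
      rw [map_sub, map_smul, map_one, smul_eq_mul, inv_mul_cancel₀ hy, sub_self]
    have h2 : IsUnit (1 + ((aug K G y)⁻¹ • y - 1)) := (nilp _ h1).isUnit_one_add
    have h3 : (1 + ((aug K G y)⁻¹ • y - 1)) = (aug K G y)⁻¹ • y := by
      rw [add_comm, sub_add_cancel]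
    rw [h3] at h2
    have h4 : y = aug K G y • ((aug K G y)⁻¹ • y) := by
      rw [smul_smul, mul_inv_cancel₀ hy, one_smul]
    rw [h4, Algebra.smul_def]
    exact ((IsUnit.mk0 _ hy).map (algebraMap K (MonoidAlgebra K G))).mul h2
  have h2K : (2 : K) ≠ 0 := by
    have hne : ((2 : ℕ) : K) ≠ 0 := by
      rw [Ne, CharP.cast_eq_zero_iff K p]
      intro hd
      have := (Nat.prime_dvd_prime_iff_eq hp Nat.prime_two).mp hd
      subst this
      rw [Nat.odd_iff] at hodd
      norm_num at hodd
    simpa using hne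
  have aug2 : aug K G 2 = 2 := map_ofNat _ 2
  have h2R : IsUnit (2 : MonoidAlgebra K G) := by
    apply unit_of_aug
    rw [aug2]
    exact_mod_cast h2K
  have comm2 : ∀ x : MonoidAlgebra K G, Commute (2 : MonoidAlgebra K G) x := by
    intro x
    have : ((2 : ℕ) : MonoidAlgebra K G) = (2 : MonoidAlgebra K G) := by norm_num
    rw [← this]
    exact Nat.cast_commute 2 x
  -- backward direction
  have bwd : ∀ u : MonoidAlgebra K G, IsUnit u → aug K G u = 1 → gstar u = Ring.inverse u →
      IsUnit (1 + u) ∧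
      (aug K G ((1 - u) * Ring.inverse (1 + u)) = 0 ∧
        gstar ((1 - u) * Ring.inverse (1 + u)) = -((1 - u) * Ring.inverse (1 + u))) ∧
      u = (1 - (1 - u) * Ring.inverse (1 + u)) *
            Ring.inverse (1 + (1 - u) * Ring.inverse (1 + u)) ∧
      u = -1 + 2 * Ring.inverse (1 + (1 - u) * Ring.inverse (1 + u)) := by
    intro u hu ha hs
    have h1u : IsUnit (1 + u) := by
      apply unit_of_aug
      rw [map_add, map_one, ha, one_add_one_eq_two]
      exact h2K
    set w := Ring.inverse (1 + u) with hwdef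
    have hw1 : (1 + u) * w = 1 := Ring.mul_inverse_cancel _ h1u
    have hw2 : w * (1 + u) = 1 := Ring.inverse_mul_cancel _ h1u
    have hwunit : IsUnit w := isUnit_rinv h1u
    set k := (1 - u) * w with hkdef
    have haugk : aug K G k = 0 := by
      rw [hkdef, map_mul, map_sub, map_one, ha, sub_self, zero_mul]
    have hcomm : Commute w (u - 1) := by
      apply commute_rinv_left
      show (1 + u) * (u - 1) = (u - 1) * (1 + u)
      noncomm_ring
    have hgk : gstar k = -k := by
      have hvu : IsUnit (Ring.inverse u) := isUnit_rinv hu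
      have hinvv : Ring.inverse (Ring.inverse u) = u := rinv_rinv hu
      have c1 : Ring.inverse u * (1 + u) = 1 + Ring.inverse u := by
        rw [mul_add, mul_one, Ring.inverse_mul_cancel _ hu, add_comm]
      have c2 : Ring.inverse u * (u - 1) = 1 - Ring.inverse u := by
        rw [mul_sub, mul_one, Ring.inverse_mul_cancel _ hu]
      calc gstar k = gstar w * gstar (1 - u) := gstar_mul _ _
        _ = Ring.inverse (1 + Ring.inverse u) * (1 - Ring.inverse u) := by
            rw [hwdef, gstar_rinv h1u, gstar_add, gstar_one, hs, gstar_sub, gstar_one, hs]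
        _ = (Ring.inverse (1 + u) * u) * (Ring.inverse u * (u - 1)) := by
            rw [← c1, ← c2, rinv_mul_rev hvu h1u, hinvv]
        _ = w * (u - 1) := by
            rw [mul_assoc, ← mul_assoc u, Ring.mul_inverse_cancel _ hu, one_mul, ← hwdef]
        _ = (u - 1) * w := hcomm
        _ = -k := by rw [hkdef, ← neg_mul, neg_sub]
    have hsum : 1 + k = 2 * w := by rw [hkdef]; exact sum_helper u w hw1
    have hdiff : 1 - k = (2 * u) * w := by rw [hkdef]; exact diff_helper u w hw1
    have h1k : IsUnit (1 + k) := by rw [hsum]; exact h2R.mul hwunit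
    have hinv1k : Ring.inverse (1 + k) = (1 + u) * Ring.inverse 2 := by
      rw [hsum, rinv_mul_rev h2R hwunit, hwdef, rinv_rinv h1u]
    have hFk : (1 - k) * Ring.inverse (1 + k) = u := by
      rw [hdiff, hinv1k, mul_assoc, ← mul_assoc w, hw2, one_mul, (comm2 u).eq, mul_assoc,
        Ring.mul_inverse_cancel _ h2R, mul_one]
    have hlast : u = -1 + 2 * Ring.inverse (1 + k) := by
      rw [hinv1k, ← mul_assoc, (comm2 (1 + u)).eq, mul_assoc,
        Ring.mul_inverse_cancel _ h2R, mul_one, ← add_assoc, neg_add_cancel, zero_add]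
    exact ⟨h1u, ⟨haugk, hgk⟩, hFk.symm, hlast⟩
  -- forward direction
  have fwd : ∀ k : MonoidAlgebra K G, aug K G k = 0 → gstar k = -k →
      ((IsUnit ((1 - k) * Ring.inverse (1 + k))
        ∧ aug K G ((1 - k) * Ring.inverse (1 + k)) = 1
        ∧ gstar ((1 - k) * Ring.inverse (1 + k))
            = Ring.inverse ((1 - k) * Ring.inverse (1 + k)))
      ∧ 1 + k = 2 * Ring.inverse (1 + (1 - k) * Ring.inverse (1 + k))) := by
    intro k hk0 hks
    have h1k : IsUnit (1 + k) := by
      apply unit_of_aug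
      rw [map_add, map_one, hk0, add_zero]
      exact one_ne_zero
    have h1k' : IsUnit (1 - k) := by
      apply unit_of_aug
      rw [map_sub, map_one, hk0, sub_zero]
      exact one_ne_zero
    set w := Ring.inverse (1 + k) with hwdef
    have hw1 : (1 + k) * w = 1 := Ring.mul_inverse_cancel _ h1k
    have hw2 : w * (1 + k) = 1 := Ring.inverse_mul_cancel _ h1k
    have hwunit : IsUnit w := isUnit_rinv h1k
    have huu : IsUnit ((1 - k) * w) := h1k'.mul hwunit
    have haugu : aug K G ((1 - k) * w) = 1 := by
      have hiw : aug K G w * aug K G (1 + k) = 1 := by rw [← map_mul, hw2, map_one]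
      rw [map_add, map_one, hk0, add_zero, mul_one] at hiw
      rw [map_mul, map_sub, map_one, hk0, sub_zero, one_mul, hiw]
    have hcm : Commute (1 - k) (1 + k) := by
      show (1 - k) * (1 + k) = (1 + k) * (1 - k)
      noncomm_ring
    have hg1 : gstar (1 + k) = 1 - k := by
      rw [gstar_add, gstar_one, hks, ← sub_eq_add_neg]
    have hg2 : gstar (1 - k) = 1 + k := by
      rw [gstar_sub, gstar_one, hks, sub_neg_eq_add]
    have hgu : gstar ((1 - k) * w) = Ring.inverse ((1 - k) * w) := by
      have hginv : gstar ((1 - k) * w) = Ring.inverse (1 - k) * (1 + k) := by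
        rw [gstar_mul, hwdef, gstar_rinv h1k, hg1, hg2]
      have hrinvu : Ring.inverse ((1 - k) * w) = (1 + k) * Ring.inverse (1 - k) := by
        rw [hwdef, rinv_mul_rev h1k' hwunit, rinv_rinv h1k]
      rw [hginv, hrinvu, (commute_rinv_left hcm).eq]
    have hsum : 1 + (1 - k) * w = 2 * w := sum_helper k w hw1
    have hfinal : 1 + k = 2 * Ring.inverse (1 + (1 - k) * w) := by
      rw [hsum, rinv_mul_rev h2R hwunit, hwdef, rinv_rinv h1k, ← mul_assoc,
        (comm2 (1 + k)).eq, mul_assoc, Ring.mul_inverse_cancel _ h2R, mul_one]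
    exact ⟨⟨huu, haugu, hgu⟩, hfinal⟩
  constructor
  · refine ⟨?_, ?_, ?_⟩
    · intro k hk
      exact (fwd k hk.1 hk.2).1
    · intro k hk k' hk' heq
      have hf := (fwd k hk.1 hk.2).2
      have hf' := (fwd k' hk'.1 hk'.2).2
      simp only at heq
      rw [heq] at hf
      have := hf.trans hf'.symm
      exact add_left_cancel this
    · intro u hu
      obtain ⟨h1u, ⟨hk0, hks⟩, hueq, -⟩ := bwd u hu.1 hu.2.1 hu.2.2
      exact ⟨(1 - u) * Ring.inverse (1 + u), ⟨hk0, hks⟩, hueq.symm⟩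
  · exact bwd
end

section
/- Let n ≥ 2 and let G be a finite 2-group which is the internal central product of subgroups G₁, …, G_n, each isomorphic to the quaternion group of order 8 (so G is an extraspecial 2-group of order 2^(2n+1)). Then the number of elements of order 4 in G equals 2^n(2^n - (-1)^n); equivalently, with G' = ⟨c⟩ of order 2 and L_G a set of elements of order 4 such that L_G ∩ L_G·c = ∅ and L_G ∪ L_G·c is the set of all elements of order 4 of G, one has |L_G| = 2^(n-1)(2^n - (-1)^n). -/
private lemma noncommProd_cpow {G : Type*} [Monoid G] {ι : Type*} (s : Finset ι)
    (c : G) (e : ι → ℕ) :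
    ∀ comm, s.noncommProd (fun i => c ^ e i) comm = c ^ (∑ i ∈ s, e i) := by
  induction s using Finset.cons_induction with
  | empty => intro comm; simp
  | cons a s ha ih =>
      intro comm
      rw [Finset.noncommProd_cons, ih, Finset.sum_cons, pow_add]

private lemma card_preimage_hom {α β : Type*} [Group α] [Group β] (f : α →* β)
    (hf : Function.Surjective f) (A : Set β) :
    Nat.card (f ⁻¹' A) = Nat.card A * Nat.card f.ker := by
  have he : (f ⁻¹' A) ≃ A × f.ker :=
    { toFun := fun x => (⟨f x, x.2⟩, ⟨(Function.surjInv hf (f x))⁻¹ * x, by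
        simp [MonoidHom.mem_ker, Function.surjInv_eq hf]⟩)
      invFun := fun p => ⟨Function.surjInv hf p.1 * p.2, by
        have h2 : f (p.2 : α) = 1 := p.2.2
        show f _ ∈ A
        rw [map_mul, Function.surjInv_eq hf, h2, mul_one]
        exact p.1.2⟩
      left_inv := fun x => by
        ext
        simp [mul_inv_cancel_left]
      right_inv := fun p => by
        have hfp : f (Function.surjInv hf p.1 * p.2) = p.1 := by
          rw [map_mul, Function.surjInv_eq hf, p.2.2, mul_one]
        refine Prod.ext (Subtype.ext ?_) (Subtype.ext ?_)
        · exact hfp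
        · show (Function.surjInv hf (f _))⁻¹ * _ = (p.2 : α)
          rw [hfp, inv_mul_cancel_left] }
  rw [Nat.card_congr he, Nat.card_prod]

private lemma card_sum_zero (n : ℕ) (hn : 1 ≤ n) :
    Nat.card {v : Fin n → ZMod 2 // ∑ i, v i = 0} = 2 ^ (n - 1) := by
  obtain ⟨m, rfl⟩ : ∃ m, n = m + 1 := ⟨n - 1, by omega⟩
  have e : (Fin m → ZMod 2) ≃ {v : Fin (m + 1) → ZMod 2 // ∑ i, v i = 0} :=
    { toFun := fun w => ⟨Fin.snoc w (-∑ i, w i), by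
        rw [Fin.sum_univ_castSucc]
        simp
        exact CharTwo.add_self_eq_zero _⟩
      invFun := fun v i => v.1 i.castSucc
      left_inv := fun w => by
        funext i
        simp
      right_inv := fun v => by
        apply Subtype.ext
        dsimp only
        funext i
        refine Fin.lastCases ?_ (fun j => ?_) i
        · rw [Fin.snoc_last]
          have h2 := v.2
          rw [Fin.sum_univ_castSucc] at h2
          exact neg_eq_of_add_eq_zero_right h2
        · rw [Fin.snoc_castSucc] }
  rw [← Nat.card_congr e, Nat.card_pi]
  simp [Nat.card_zmod]

/-- `G` is the internal central product of the subgroups `S 0, …, S (n-1)`: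
`G = (S 0)⋯(S (n-1))`, elements of distinct factors commute, and any two distinct
factors intersect in the center `Z(G)`, which has order `2`. -/
def IsInternalCentralProduct (G : Type*) [Group G] (n : ℕ) (S : Fin n → Subgroup G) : Prop :=
  (⨆ i, S i) = ⊤ ∧
  (∀ i j, i ≠ j → ∀ x ∈ S i, ∀ y ∈ S j, Commute x y) ∧
  (∀ i j, i ≠ j → S i ⊓ S j = Subgroup.center G) ∧
  Nat.card (Subgroup.center G) = 2

/-- Lemma 4: if `n ≥ 2` and `G` is the internal central product of `n`
copies of the quaternion group of order `8`, then the number of elements of order `4`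
in `G` is `2^n (2^n - (-1)^n)`; equivalently, `|L_G| = 2^(n-1) (2^n - (-1)^n)` for any
set `L_G` of order-`4` elements with `L_G ∩ L_G·c = ∅` and
`L_G ∪ L_G·c = {g : |g| = 4}`, where `G' = ⟨c⟩`. -/
theorem stmt8 (G : Type*) [Group G] [Finite G] (n : ℕ) (hn : 2 ≤ n)
    (S : Fin n → Subgroup G) (hcp : IsInternalCentralProduct G n S)
    (hquat : ∀ i, Nonempty (S i ≃* QuaternionGroup 2)) :
    (Nat.card {g : G | orderOf g = 4} : ℤ) = 2 ^ n * (2 ^ n - (-1) ^ n) ∧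
    (∀ (c : G) (L : Set G), commutator G = Subgroup.zpowers c → orderOf c = 2 →
      (∀ x ∈ L, orderOf x = 4) → Disjoint L ((· * c) '' L) →
      L ∪ ((· * c) '' L) = {g : G | orderOf g = 4} →
      (Nat.card L : ℤ) = 2 ^ (n - 1) * (2 ^ n - (-1) ^ n)) := by
  classical
  obtain ⟨hsup, hcomm, hint, hZ⟩ := hcp
  haveI : Fintype G := Fintype.ofFinite G
  -- the central element c
  haveI hZnt : Nontrivial (Subgroup.center G) := by
    rw [← Finite.one_lt_card_iff_nontrivial]; omega
  obtain ⟨c', hc'⟩ := exists_ne (1 : Subgroup.center G)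
  set c : G := (c' : G) with hcdef
  have hcmem : c ∈ Subgroup.center G := c'.2
  have hcne : c ≠ 1 := fun h => hc' (Subtype.ext h)
  have hcsq : c ^ 2 = 1 := by
    have h1 : c' ^ 2 = 1 := by rw [← hZ, pow_card_eq_one']
    have := congrArg (Subtype.val) h1
    simpa using this
  -- every central element is 1 or c
  have hZeq : ∀ z ∈ Subgroup.center G, z = 1 ∨ z = c := by
    intro z hz
    by_contra hcon
    push_neg at hcon
    set z' : Subgroup.center G := ⟨z, hz⟩ with hz'
    have h1 : z' ≠ 1 := fun h => hcon.1 (congrArg Subtype.val h)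
    have h2 : z' ≠ c' := fun h => hcon.2 (congrArg Subtype.val h)
    have h3 : ({1, c', z'} : Finset (Subgroup.center G)).card = 3 := by
      rw [Finset.card_insert_of_notMem (by simp [Ne.symm hc', Ne.symm h1]),
        Finset.card_insert_of_notMem (by simp [Ne.symm h2]), Finset.card_singleton]
    have h4 := Finset.card_le_univ ({1, c', z'} : Finset (Subgroup.center G))
    rw [h3, ← Nat.card_eq_fintype_card, hZ] at h4
    omega
  -- c belongs to every factor
  have hc_in : ∀ i, c ∈ S i := by
    intro i
    have hj : ∃ j, j ≠ i := by
      refine ⟨if h : i = ⟨0, by omega⟩ then ⟨1, by omega⟩ else ⟨0, by omega⟩, ?_⟩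
      split_ifs with h
      · subst h; simp [Fin.ext_iff]
      · exact fun hh => h hh.symm
    obtain ⟨j, hji⟩ := hj
    have h5 : c ∈ S i ⊓ S j := (hint i j (Ne.symm hji)).symm ▸ hcmem
    exact h5.1
  -- quaternion facts
  have hq2 : ∀ q : QuaternionGroup 2, q ^ 2 = 1 ∨ q ^ 2 = QuaternionGroup.a 2 := by decide
  have hq1 : ∀ q : QuaternionGroup 2, q ^ 2 = 1 ∧ q ≠ 1 → q = QuaternionGroup.a 2 := by decide
  have hq6 : (∑ q : QuaternionGroup 2, if q ^ 2 = QuaternionGroup.a 2 then (-1 : ℤ) else 1)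
      = -4 := by decide
  set e : ∀ i, S i ≃* QuaternionGroup 2 := fun i => (hquat i).some with he
  set ci : ∀ i, S i := fun i => ⟨c, hc_in i⟩ with hci
  have hci_sq : ∀ i, (ci i) ^ 2 = 1 := by
    intro i
    apply Subtype.ext
    simpa using hcsq
  have hci_ne : ∀ i, ci i ≠ 1 := by
    intro i h
    exact hcne (congrArg Subtype.val h)
  have hea : ∀ i, (e i) (ci i) = QuaternionGroup.a 2 := by
    intro i
    apply hq1
    constructor
    · rw [← map_pow, hci_sq i, map_one]
    · intro h
      exact hci_ne i ((e i).injective (by rw [h, map_one]))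
  -- squares in each factor are 1 or c
  have hsq : ∀ i (x : S i), (x : G) ^ 2 = 1 ∨ (x : G) ^ 2 = c := by
    intro i x
    have hx2 : ((x ^ 2 : S i) : G) = (x : G) ^ 2 := by rw [SubgroupClass.coe_pow]
    rcases hq2 ((e i) x) with h | h
    · left
      have : x ^ 2 = 1 := (e i).injective (by rw [map_pow, h, map_one])
      rw [← hx2, this]; rfl
    · right
      have : x ^ 2 = ci i := (e i).injective (by rw [map_pow, h, ← hea i])
      rw [← hx2, this]
  -- the signed sum over each factor
  have hsum : ∀ i, (∑ x : S i, if (x : G) ^ 2 = c then (-1 : ℤ) else 1) = -4 := by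
    intro i
    rw [← hq6]
    apply Fintype.sum_equiv (e i).toEquiv
    intro x
    have hiff : (x : G) ^ 2 = c ↔ ((e i) x) ^ 2 = QuaternionGroup.a 2 := by
      rw [← hea i, ← map_pow, EmbeddingLike.apply_eq_iff_eq, Subtype.ext_iff]
      simp [hci]
    exact if_congr hiff rfl rfl
  -- the central product homomorphism
  have hcomm' : Pairwise fun i j : Fin n => ∀ x y : G, x ∈ S i → y ∈ S j → Commute x y :=
    fun {i j} hij x y hx hy => hcomm i j hij x hx y hy
  set φ : (∀ i, S i) →* G := Subgroup.noncommPiCoprod hcomm' with hφ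
  have hφsurj : Function.Surjective φ := by
    rw [← MonoidHom.range_eq_top, hφ, Subgroup.noncommPiCoprod_range]
    exact hsup
  -- squares
  have hφsq : ∀ s : ∀ i, S i,
      (φ s) ^ 2 = c ^ (∑ i, if ((s i : G)) ^ 2 = c then 1 else 0) := by
    intro s
    rw [← map_pow, hφ, Subgroup.noncommPiCoprod_apply]
    have hcg : ∀ i ∈ Finset.univ, (((s ^ 2 : ∀ i, S i) i : G))
        = c ^ (if ((s i : G)) ^ 2 = c then 1 else 0) := by
      intro i _
      have hx2 : ((s ^ 2 : ∀ i, S i) i : G) = (s i : G) ^ 2 := by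
        simp [Pi.pow_apply]
      rw [hx2]
      rcases hsq i (s i) with h | h
      · rw [h, if_neg (fun hh : (1 : G) = c => hcne hh.symm), pow_zero]
      · rw [if_pos h, h, pow_one]
    exact (Finset.noncommProd_congr rfl hcg _).trans (noncommProd_cpow _ _ _ _)
  have hcpow : ∀ m : ℕ, c ^ m = if Even m then 1 else c := by
    intro m
    rcases Nat.even_or_odd m with hm | hm
    · obtain ⟨t, ht⟩ := hm
      rw [if_pos ⟨t, ht⟩, ht, ← two_mul, pow_mul, hcsq, one_pow]
    · obtain ⟨t, ht⟩ := hm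
      rw [if_neg (by simp [ht, parity_simps]), ht, pow_add, pow_mul, hcsq, one_pow,
        one_mul, pow_one]
  -- every square is 1 or c
  have hdichG : ∀ g : G, g ^ 2 = 1 ∨ g ^ 2 = c := by
    intro g
    obtain ⟨s, rfl⟩ := hφsurj g
    rw [hφsq s, hcpow]
    split_ifs
    · left; rfl
    · right; rfl
  -- order-4 elements are exactly those with square c
  have hAset : {g : G | orderOf g = 4} = {g : G | g ^ 2 = c} := by
    ext g
    simp only [Set.mem_setOf_eq]
    constructor
    · intro h4
      rcases hdichG g with h | h
      · exfalso
        have := orderOf_dvd_of_pow_eq_one h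
        rw [h4] at this
        omega
      · exact h
    · intro h2
      have h4 : g ^ 4 = 1 := by
        rw [show (4 : ℕ) = 2 * 2 from rfl, pow_mul, h2, hcsq]
      have hd : orderOf g ∣ 4 := orderOf_dvd_of_pow_eq_one h4
      have hle : orderOf g ≤ 4 := Nat.le_of_dvd (by norm_num) hd
      interval_cases h : orderOf g
      · exact absurd hd (by norm_num)
      · exfalso
        rw [orderOf_eq_one_iff] at h
        rw [h, one_pow] at h2
        exact hcne h2.symm
      · exfalso
        have := pow_orderOf_eq_one g
        rw [h] at this
        rw [this] at h2
        exact hcne h2.symm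
      · exact absurd hd (by norm_num)
      · rfl
  -- the signed sum over the whole product
  have hsum_all : (2 : ℤ) * (Finset.univ.filter
        (fun s : ∀ i, S i => (φ s) ^ 2 = c)).card = 8 ^ n - (-4) ^ n := by
    have h1 : ∀ s : ∀ i, S i, (if (φ s) ^ 2 = c then (2 : ℤ) else 0)
        = 1 - ∏ i, (if ((s i : G)) ^ 2 = c then (-1 : ℤ) else 1) := by
      intro s
      have hprl : ∏ i, (if ((s i : G)) ^ 2 = c then (-1 : ℤ) else 1)
          = (-1 : ℤ) ^ (∑ i, if ((s i : G)) ^ 2 = c then 1 else 0) := by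
        rw [← Finset.prod_pow_eq_pow_sum]
        apply Finset.prod_congr rfl
        intro i _
        split_ifs <;> simp
      rw [hprl, hφsq s, hcpow]
      rcases Nat.even_or_odd (∑ i, if ((s i : G)) ^ 2 = c then 1 else 0) with hp | hp
      · rw [if_pos hp, Even.neg_one_pow hp, if_neg (fun hh : (1 : G) = c => hcne hh.symm)]
        ring
      · rw [if_neg (Nat.not_even_iff_odd.mpr hp), Odd.neg_one_pow hp, if_pos rfl]
        ring
    have h2 : ∑ s : ∀ i, S i, (if (φ s) ^ 2 = c then (2 : ℤ) else 0)
        = 8 ^ n - (-4) ^ n := by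
      rw [Finset.sum_congr rfl (fun s _ => h1 s), Finset.sum_sub_distrib]
      have h3 : ∑ s : ∀ i, S i, (1 : ℤ) = 8 ^ n := by
        rw [Finset.sum_const, Finset.card_univ, Fintype.card_pi]
        have : ∀ i, Fintype.card (S i) = 8 := by
          intro i
          rw [← Nat.card_eq_fintype_card, Nat.card_congr (e i).toEquiv,
            Nat.card_eq_fintype_card, QuaternionGroup.card]
        rw [Finset.prod_congr rfl (fun i _ => this i), Finset.prod_const, Finset.card_univ,
          Fintype.card_fin]
        simp [mul_comm]
      have h4 : ∑ s : ∀ i, S i, ∏ i, (if ((s i : G)) ^ 2 = c then (-1 : ℤ) else 1)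
          = (-4) ^ n := by
        rw [← Fintype.prod_sum (fun i (x : S i) => if ((x : G)) ^ 2 = c then (-1 : ℤ) else 1)]
        rw [Finset.prod_congr rfl (fun i _ => hsum i), Finset.prod_const, Finset.card_univ,
          Fintype.card_fin]
      rw [h3, h4]
    rw [← h2, Finset.sum_ite, Finset.sum_const, Finset.sum_const_zero, add_zero,
      nsmul_eq_mul, mul_comm]
  -- kernel elements are central tuples
  have hker_central : ∀ s : ∀ i, S i, φ s = 1 → ∀ i, (s i : G) ∈ Subgroup.center G := by
    intro s hs i
    rw [hφ, Subgroup.noncommPiCoprod_apply] at hs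
    replace hs := (Finset.mul_noncommProd_erase Finset.univ (Finset.mem_univ i)
      (fun j => ((s j : G))) _).trans hs
    set T : Subgroup G := ⨆ j ∈ Finset.univ.erase i, S j with hT
    have key : ∃ P ∈ T, (s i : G) * P = 1 := by
      refine ⟨_, ?_, hs⟩
      apply Subgroup.noncommProd_mem
      intro j hj
      exact Subgroup.mem_iSup_of_mem j (Subgroup.mem_iSup_of_mem hj (s j).2)
    obtain ⟨P, hPT, hP1⟩ := key
    have hsiT : (s i : G) ∈ T := by
      rw [eq_inv_of_mul_eq_one_left hP1]
      exact T.inv_mem hPT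
    -- T centralizes S i
    have hT_cent : T ≤ Subgroup.centralizer (S i) := by
      refine iSup_le fun j => iSup_le fun hj => ?_
      intro z hz
      rw [Subgroup.mem_centralizer_iff]
      intro y hy
      exact hcomm i j (fun hh => (Finset.mem_erase.mp hj).1 hh.symm) y hy z hz
    rw [Subgroup.mem_center_iff]
    intro g
    have hg : g ∈ ⨆ m, S m := hsup.symm ▸ Subgroup.mem_top g
    have hle : (⨆ m, S m) ≤ Subgroup.centralizer {(s i : G)} := by
      refine iSup_le fun m => ?_
      by_cases hmi : m = i
      · subst hmi
        intro z hz
        rw [Subgroup.mem_centralizer_iff]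
        intro y hy
        rw [Set.mem_singleton_iff] at hy
        subst hy
        exact (Subgroup.mem_centralizer_iff.mp (hT_cent hsiT) z hz).symm
      · intro z hz
        rw [Subgroup.mem_centralizer_iff]
        intro y hy
        rw [Set.mem_singleton_iff] at hy
        subst hy
        exact hcomm i m (fun hh => hmi hh.symm) _ (s i).2 z hz
    have := Subgroup.mem_centralizer_iff.mp (hle hg)
    exact (this _ rfl).symm
  -- value of φ on 1-or-c tuples
  have hφval : ∀ s : ∀ i, S i, (∀ i, (s i : G) = 1 ∨ (s i : G) = c) →
      φ s = c ^ (∑ i, if (s i : G) = c then 1 else 0) := by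
    intro s hdich
    rw [hφ, Subgroup.noncommPiCoprod_apply]
    have hcg : ∀ i ∈ Finset.univ,
        ((s i : G)) = c ^ (if (s i : G) = c then 1 else 0) := by
      intro i _
      rcases hdich i with h | h
      · rw [h, if_neg (fun hh : (1 : G) = c => hcne hh.symm), pow_zero]
      · rw [if_pos h, h, pow_one]
    exact (Finset.noncommProd_congr rfl hcg _).trans (noncommProd_cpow _ _ _ _)
  -- cardinality of the kernel
  have hker_card : Nat.card φ.ker = 2 ^ (n - 1) := by
    have hdi : ∀ s : φ.ker, ∀ i, ((s : ∀ i, S i) i : G) = 1 ∨ ((s : ∀ i, S i) i : G) = c :=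
      fun s i => hZeq _ (hker_central s s.2 i)
    let ρ : φ.ker → {v : Fin n → ZMod 2 // ∑ i, v i = 0} := fun s =>
      ⟨fun i => if ((s : ∀ i, S i) i : G) = c then 1 else 0, by
        have hv := hφval s (hdi s)
        have h1 : φ (s : ∀ i, S i) = 1 := s.2
        rw [h1] at hv
        have heven : Even (∑ i, if ((s : ∀ i, S i) i : G) = c then 1 else 0) := by
          by_contra hodd
          rw [hcpow, if_neg hodd] at hv
          exact hcne hv.symm
        have hc0 : ((∑ i, if ((s : ∀ i, S i) i : G) = c then (1 : ℕ) else 0 : ℕ) : ZMod 2) = 0 := by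
          rw [ZMod.natCast_eq_zero_iff]
          exact heven.two_dvd
        have hcast2 : ((∑ i, if ((s : ∀ i, S i) i : G) = c then (1 : ℕ) else 0 : ℕ) : ZMod 2)
            = ∑ i, if ((s : ∀ i, S i) i : G) = c then (1 : ZMod 2) else 0 := by
          rw [Nat.cast_sum]
          apply Finset.sum_congr rfl
          intro i _
          split_ifs <;> simp
        rw [← hcast2, hc0]⟩
    have hbij : Function.Bijective ρ := by
      constructor
      · intro a b hab
        have hab' := congrArg Subtype.val hab
        apply Subtype.ext
        funext i
        apply Subtype.ext
        have hi := congrFun hab' i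
        simp only [ρ] at hi
        rcases hdi a i with ha | ha <;> rcases hdi b i with hb | hb
        · rw [ha, hb]
        · exfalso
          rw [ha, hb, if_neg (fun hh : (1 : G) = c => hcne hh.symm), if_pos rfl] at hi
          exact (by decide : ((0 : ZMod 2) ≠ 1)) hi
        · exfalso
          rw [ha, hb, if_pos rfl, if_neg (fun hh : (1 : G) = c => hcne hh.symm)] at hi
          exact (by decide : ((1 : ZMod 2) ≠ 0)) hi
        · rw [ha, hb]
      · rintro ⟨v, hv⟩
        set s : ∀ i, S i := fun i => if v i = 1 then ⟨c, hc_in i⟩ else 1 with hs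
        have hcoe : ∀ i, (s i : G) = if v i = 1 then c else 1 := by
          intro i
          by_cases h : v i = 1
          · rw [if_pos h, hs]; simp [h]
          · rw [if_neg h, hs]; simp [h]
        have hdich : ∀ i, (s i : G) = 1 ∨ (s i : G) = c := by
          intro i
          rw [hcoe i]
          split_ifs
          · right; rfl
          · left; rfl
        have hind : ∀ i, (if (s i : G) = c then (1 : ℕ) else 0) = if v i = 1 then 1 else 0 := by
          intro i
          by_cases h : v i = 1
          · simp [hcoe i, h]
          · simp [hcoe i, h, Ne.symm hcne]
        have hKnat : (∑ i, if (s i : G) = c then (1 : ℕ) else 0)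
            = ∑ i, if v i = 1 then (1 : ℕ) else 0 :=
          Finset.sum_congr rfl (fun i _ => hind i)
        have hcast : ((∑ i, if v i = 1 then (1 : ℕ) else 0 : ℕ) : ZMod 2) = ∑ i, v i := by
          push_cast
          apply Finset.sum_congr rfl
          intro i _
          rcases (by decide : ∀ x : ZMod 2, x = 0 ∨ x = 1) (v i) with h | h
          · rw [h]; decide
          · rw [h]; decide
        have heven : Even (∑ i, if (s i : G) = c then (1 : ℕ) else 0) := by
          have h2d : (2 : ℕ) ∣ ∑ i, if (s i : G) = c then (1 : ℕ) else 0 := by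
            rw [← ZMod.natCast_eq_zero_iff, hKnat, hcast]
            exact hv
          obtain ⟨t, ht⟩ := h2d
          exact ⟨t, by omega⟩
        have hker : φ s = 1 := by
          rw [hφval s hdich, hcpow, if_pos heven]
        refine ⟨⟨s, hker⟩, ?_⟩
        apply Subtype.ext
        funext i
        show (if ((s i : G)) = c then (1 : ZMod 2) else 0) = v i
        by_cases h : v i = 1
        · simp [hcoe i, h]
        · rw [hcoe i, if_neg h, if_neg (fun hh : (1 : G) = c => hcne hh.symm)]
          rcases (by decide : ∀ x : ZMod 2, x = 0 ∨ x = 1) (v i) with hx | hx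
          · exact hx.symm
          · exact absurd hx h
    rw [← card_sum_zero n (by omega), Nat.card_congr (Equiv.ofBijective ρ hbij)]
  -- counting elements with square c
  set A : Set G := {g : G | g ^ 2 = c} with hA
  have h1 : Nat.card (φ ⁻¹' A) = Nat.card {s : ∀ i, S i // (φ s) ^ 2 = c} :=
    Nat.card_congr (Equiv.subtypeEquivRight (fun s => Iff.rfl))
  have h2 : Nat.card {s : ∀ i, S i // (φ s) ^ 2 = c}
      = (Finset.univ.filter (fun s : ∀ i, S i => (φ s) ^ 2 = c)).card := by
    rw [Nat.card_eq_fintype_card, Fintype.card_subtype]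
  have hONat : Nat.card A * 2 ^ (n - 1)
      = (Finset.univ.filter (fun s : ∀ i, S i => (φ s) ^ 2 = c)).card := by
    rw [← hker_card, ← card_preimage_hom φ hφsurj A, h1, h2]
  have part1 : (Nat.card A : ℤ) = 2 ^ n * (2 ^ n - (-1) ^ n) := by
    have hcast := congrArg (fun m : ℕ => (m : ℤ)) hONat
    push_cast at hcast
    have h2n1 : (2 : ℤ) * 2 ^ (n - 1) = 2 ^ n := by
      rw [← pow_succ']
      congr 1
      omega
    have hmul : (Nat.card A : ℤ) * 2 ^ n = 8 ^ n - (-4) ^ n := by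
      calc (Nat.card A : ℤ) * 2 ^ n = 2 * ((Nat.card A : ℤ) * 2 ^ (n - 1)) := by
            rw [← h2n1]; ring
        _ = 2 * ((Finset.univ.filter (fun s : ∀ i, S i => (φ s) ^ 2 = c)).card : ℤ) := by
            rw [hcast]
        _ = 8 ^ n - (-4) ^ n := hsum_all
    have h2ne : (2 : ℤ) ^ n ≠ 0 := pow_ne_zero _ two_ne_zero
    apply mul_right_cancel₀ h2ne
    rw [hmul]
    have h8 : (8 : ℤ) ^ n = 2 ^ n * 2 ^ n * 2 ^ n := by
      rw [← mul_pow, ← mul_pow]; norm_num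
    have h4 : ((-4) : ℤ) ^ n = (-1) ^ n * (2 ^ n * 2 ^ n) := by
      rw [← mul_pow, ← mul_pow]; norm_num
    rw [h8, h4]; ring
  have part1' : (Nat.card {g : G | orderOf g = 4} : ℤ) = 2 ^ n * (2 ^ n - (-1) ^ n) := by
    rw [hAset]; exact part1
  refine ⟨part1', ?_⟩
  intro c₀ L _h1 _h2 _h3 hdisj hunion
  have hLfin : L.Finite := Set.toFinite L
  have him : ((· * c₀) '' L).ncard = L.ncard :=
    Set.ncard_image_of_injective L (mul_left_injective c₀)
  have hu : Nat.card {g : G | orderOf g = 4} = 2 * Nat.card L := by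
    rw [← hunion, Nat.card_coe_set_eq,
      Set.ncard_union_eq hdisj hLfin (hLfin.image _), him, Nat.card_coe_set_eq]
    omega
  have hfin : (2 : ℤ) * (Nat.card L : ℤ) = 2 * (2 ^ (n - 1) * (2 ^ n - (-1) ^ n)) := by
    have := part1'
    rw [hu] at this
    push_cast at this
    rw [this]
    have h2n1 : (2 : ℤ) * 2 ^ (n - 1) = 2 ^ n := by
      rw [← pow_succ']
      congr 1
      omega
    rw [← h2n1]
    ring
  exact mul_left_cancel₀ two_ne_zero hfin
end

section
/- Let n ≥ 2 and let G be a finite 2-group which is the internal central product of subgroups G₁, …, G_n, each isomorphic to the quaternion group of order 8. Then for every element b ∈ G of order 4 there exists an element w ∈ G of order 2 such that w does not commute with b. -/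
/- Auxiliary lemmas -/

lemma q8_pow4 : ∀ x : QuaternionGroup 2, x ^ 4 = 1 := by decide
lemma q8_invol : ∀ x y : QuaternionGroup 2, x^2 = 1 → y^2 = 1 → x ≠ 1 → y ≠ 1 → x = y := by decide
lemma q8_xa : (QuaternionGroup.xa 0 : QuaternionGroup 2)^2 ≠ 1 := by decide

section helpers
variable {G : Type*} [Group G] {H : Subgroup G}

lemma sub_pow4 (e : H ≃* QuaternionGroup 2) {x : G} (hx : x ∈ H) : x ^ 4 = 1 := by
  have h : (⟨x, hx⟩ : H) ^ 4 = 1 := e.injective (by rw [map_pow, map_one]; exact q8_pow4 _)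
  simpa using congrArg (Subtype.val) h

lemma sub_invol (e : H ≃* QuaternionGroup 2) {x y : G} (hx : x ∈ H) (hy : y ∈ H)
    (hx2 : x ^ 2 = 1) (hy2 : y ^ 2 = 1) (hx1 : x ≠ 1) (hy1 : y ≠ 1) : x = y := by
  have hx2' : (⟨x, hx⟩ : H) ^ 2 = 1 := by ext; simpa using hx2
  have hy2' : (⟨y, hy⟩ : H) ^ 2 = 1 := by ext; simpa using hy2
  have hx1' : (⟨x, hx⟩ : H) ≠ 1 := by simpa [Subtype.ext_iff] using hx1
  have hy1' : (⟨y, hy⟩ : H) ≠ 1 := by simpa [Subtype.ext_iff] using hy1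
  have := q8_invol (e ⟨x, hx⟩) (e ⟨y, hy⟩)
    (by rw [← map_pow, hx2', map_one]) (by rw [← map_pow, hy2', map_one])
    (by simpa using e.injective.ne hx1') (by simpa using e.injective.ne hy1')
  have := e.injective this
  simpa [Subtype.ext_iff] using this

lemma sub_exists4 (e : H ≃* QuaternionGroup 2) : ∃ x ∈ H, x ^ 4 = 1 ∧ x ^ 2 ≠ 1 := by
  refine ⟨(e.symm (QuaternionGroup.xa 0) : G), (e.symm (QuaternionGroup.xa 0)).2,
    sub_pow4 e (e.symm (QuaternionGroup.xa 0)).2, ?_⟩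
  intro h
  have h' : (e.symm (QuaternionGroup.xa 0)) ^ 2 = 1 := by ext; simpa using h
  apply q8_xa
  have := congrArg e h'
  rwa [map_pow, map_one, MulEquiv.apply_symm_apply] at this

lemma ord4 {x : G} (h4 : x ^ 4 = 1) (h2 : x ^ 2 ≠ 1) : orderOf x = 4 := by
  have hd : orderOf x ∣ 4 := orderOf_dvd_of_pow_eq_one h4
  have h0 : orderOf x ≠ 0 := by
    intro h
    exact (orderOf_eq_zero_iff.mp h) (isOfFinOrder_iff_pow_eq_one.mpr ⟨4, by norm_num, h4⟩)
  have hle : orderOf x ≤ 4 := Nat.le_of_dvd (by norm_num) hd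
  interval_cases h : orderOf x
  · simp at h0
  · have hx1 : x = 1 := orderOf_eq_one_iff.mp h
    exact absurd (by simp [hx1]) h2
  · exact absurd (by simpa [h] using pow_orderOf_eq_one x) h2
  · norm_num at hd
  · rfl

lemma decomp {n : ℕ} (S : Fin n → Subgroup G) (htop : (⨆ i, S i) = ⊤)
    (hcomm : ∀ i j, i ≠ j → ∀ x ∈ S i, ∀ y ∈ S j, Commute x y) (j : Fin n) (b : G) :
    ∃ s ∈ S j, ∃ c ∈ Subgroup.centralizer (S j : Set G), b = s * c := by
  have hb : b ∈ ⨆ i, S i := htop ▸ Subgroup.mem_top b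
  refine Subgroup.iSup_induction S (C := fun b =>
    ∃ s ∈ S j, ∃ c ∈ Subgroup.centralizer (S j : Set G), b = s * c) hb ?_ ?_ ?_
  · intro i x hx
    rcases eq_or_ne i j with rfl | hij
    · exact ⟨x, hx, 1, one_mem _, by simp⟩
    · refine ⟨1, one_mem _, x, ?_, by simp⟩
      exact Subgroup.mem_centralizer_iff.mpr fun t ht => hcomm j i hij.symm t ht x hx
  · exact ⟨1, one_mem _, 1, one_mem _, by simp⟩
  · rintro x y ⟨s, hs, c, hc, rfl⟩ ⟨s', hs', c', hc', rfl⟩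
    refine ⟨s * s', mul_mem hs hs', (s'⁻¹ * c * s') * c', mul_mem ?_ hc', by group⟩
    refine Subgroup.mem_centralizer_iff.mpr fun t ht => ?_
    have h1 : s' * t * s'⁻¹ ∈ S j := mul_mem (mul_mem hs' ht) (inv_mem hs')
    have h2 := Subgroup.mem_centralizer_iff.mp hc _ h1
    calc t * (s'⁻¹ * c * s') = s'⁻¹ * ((s' * t * s'⁻¹) * c) * s' := by group
    _ = s'⁻¹ * (c * (s' * t * s'⁻¹)) * s' := by rw [← h2]
    _ = (s'⁻¹ * c * s') * t := by group

end helpers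

theorem stmt10' (G : Type*) [Group G] [Finite G] (n : ℕ) (hn : 2 ≤ n)
    (S : Fin n → Subgroup G)
    (htop : (⨆ i, S i) = ⊤)
    (hcomm : ∀ i j, i ≠ j → ∀ x ∈ S i, ∀ y ∈ S j, Commute x y)
    (hinter : ∀ i j, i ≠ j → S i ⊓ S j = Subgroup.center G)
    (hcard : Nat.card (Subgroup.center G) = 2)
    (hquat : ∀ i, Nonempty (S i ≃* QuaternionGroup 2)) :
    ∀ b : G, orderOf b = 4 → ∃ w : G, orderOf w = 2 ∧ ¬ Commute w b := by
  intro b hb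
  -- the nontrivial central element
  have hnt : Nontrivial (Subgroup.center G) := by
    exact Finite.one_lt_card_iff_nontrivial.mp (by omega)
  obtain ⟨zz, hzz⟩ := exists_ne (1 : Subgroup.center G)
  set z : G := (zz : G) with hzdef
  have hz1 : z ≠ 1 := fun h => hzz (Subtype.ext h)
  have hzZ : z ∈ Subgroup.center G := zz.2
  have hz2 : z ^ 2 = 1 := by
    have : zz ^ 2 = 1 := by
      have := pow_card_eq_one' (x := zz)
      rwa [hcard] at this
    simpa [Subtype.ext_iff] using this
  -- b is not central
  have hbZ : b ∉ Subgroup.center G := by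
    intro hmem
    have h2 : b ^ 2 = 1 := by
      have : (⟨b, hmem⟩ : Subgroup.center G) ^ 2 = 1 := by
        have := pow_card_eq_one' (x := (⟨b, hmem⟩ : Subgroup.center G))
        rwa [hcard] at this
      simpa [Subtype.ext_iff] using this
    have := orderOf_dvd_of_pow_eq_one h2
    rw [hb] at this; norm_num at this
  -- find a factor with a non-commuting element
  obtain ⟨i, h, hhSi, hhb⟩ : ∃ i, ∃ h ∈ S i, ¬ Commute h b := by
    by_contra hcon
    push_neg at hcon
    apply hbZ
    rw [Subgroup.mem_center_iff]
    intro g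
    have hg : g ∈ Subgroup.centralizer {b} := by
      have hle : (⨆ i, S i) ≤ Subgroup.centralizer {b} := iSup_le fun i x hx =>
        Subgroup.mem_centralizer_iff.mpr (by
          rintro m rfl
          exact (hcon i x hx).symm)
      exact hle (htop ▸ Subgroup.mem_top g)
    have := Subgroup.mem_centralizer_iff.mp hg b rfl
    exact this.symm
  -- a second factor
  obtain ⟨j, hji⟩ : ∃ j : Fin n, j ≠ i := by
    have : Nontrivial (Fin n) := Fin.nontrivial_iff_two_le.mpr hn
    exact exists_ne i
  have hij : i ≠ j := hji.symm
  obtain ⟨ei⟩ := hquat i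
  obtain ⟨ej⟩ := hquat j
  -- z belongs to both factors
  have hzSi : z ∈ S i := by
    have : z ∈ S i ⊓ S j := (hinter i j hij) ▸ hzZ
    exact this.1
  have hzSj : z ∈ S j := by
    have : z ∈ S i ⊓ S j := (hinter i j hij) ▸ hzZ
    exact this.2
  -- involutions in a factor equal z
  have hinvol : ∀ (k : Fin n) (e : S k ≃* QuaternionGroup 2), z ∈ S k →
      ∀ x ∈ S k, x ^ 2 = 1 → x ≠ 1 → x = z := by
    intro k e hzk x hx hx2 hx1
    exact sub_invol e hx hzk hx2 hz2 hx1 hz1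
  -- h has order 4 and h^2 = z
  have hh4 : h ^ 4 = 1 := sub_pow4 ei hhSi
  have hh2 : h ^ 2 ≠ 1 := by
    intro h2
    rcases eq_or_ne h 1 with rfl | h1
    · exact hhb (Commute.one_left b)
    · have hhz : h = z := hinvol i ei hzSi h hhSi h2 h1
      have : Commute h b := by
        rw [hhz]; exact (commute_iff_eq _ _).mpr (Subgroup.mem_center_iff.mp hzZ b).symm
      exact hhb this
  have hhsq : h ^ 2 = z := by
    refine hinvol i ei hzSi (h ^ 2) (pow_mem hhSi 2) ?_ hh2
    rw [← pow_mul]; norm_num; exact hh4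
  -- decompose b over the factor j
  obtain ⟨s, hsSj, c, hc, rfl⟩ := decomp S htop hcomm j b
  -- choose h' in S j of order 4 commuting with b
  obtain ⟨h', hh'Sj, hh'4, hh'2, hh'b⟩ :
      ∃ h' ∈ S j, h' ^ 4 = 1 ∧ h' ^ 2 ≠ 1 ∧ Commute h' (s * c) := by
    have hcomm_c : ∀ x ∈ S j, Commute x c := fun x hx =>
      (commute_iff_eq x c).mpr (Subgroup.mem_centralizer_iff.mp hc x hx)
    rcases eq_or_ne (s ^ 2) 1 with hs2 | hs2
    · -- s is central
      have hs_cent : s ∈ Subgroup.center G := by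
        rcases eq_or_ne s 1 with rfl | hs1
        · exact Subgroup.one_mem _
        · have : s = z := hinvol j ej hzSj s hsSj hs2 hs1
          exact this ▸ hzZ
      obtain ⟨x, hxSj, hx4, hx2⟩ := sub_exists4 ej
      refine ⟨x, hxSj, hx4, hx2, Commute.mul_right ?_ (hcomm_c x hxSj)⟩
      exact (commute_iff_eq x s).mpr (Subgroup.mem_center_iff.mp hs_cent x)
    · exact ⟨s, hsSj, sub_pow4 ej hsSj, hs2,
        Commute.mul_right (Commute.refl s) (hcomm_c s hsSj)⟩
  have hh'sq : h' ^ 2 = z := by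
    refine hinvol j ej hzSj (h' ^ 2) (pow_mem hh'Sj 2) ?_ hh'2
    rw [← pow_mul]; norm_num; exact hh'4
  -- w = h * h'
  have hcomm_hh' : Commute h h' := hcomm i j hij h hhSi h' hh'Sj
  refine ⟨h * h', ?_, ?_⟩
  · have hw2 : (h * h') ^ 2 = 1 := by
      rw [hcomm_hh'.mul_pow, hhsq, hh'sq, ← pow_two, hz2]
    have hw1 : h * h' ≠ 1 := by
      intro hw
      have : h = h'⁻¹ := by
        rw [eq_inv_iff_mul_eq_one]; exact hw
      have hSij : h ∈ S i ⊓ S j := Subgroup.mem_inf.mpr ⟨hhSi, by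
        rw [this]; exact inv_mem hh'Sj⟩
      rw [hinter i j hij] at hSij
      exact hhb ((commute_iff_eq _ _).mpr (Subgroup.mem_center_iff.mp hSij (s * c)).symm)
    exact orderOf_eq_prime hw2 hw1
  · intro hcw
    apply hhb
    have key : (h * (s * c)) * h' = ((s * c) * h) * h' := by
      calc (h * (s * c)) * h' = h * ((s * c) * h') := by group
      _ = h * (h' * (s * c)) := by rw [hh'b.eq]
      _ = (h * h') * (s * c) := by group
      _ = (s * c) * (h * h') := hcw.eq
      _ = ((s * c) * h) * h' := by group
    exact (commute_iff_eq _ _).mpr (mul_right_cancel key)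

/-- if `n ≥ 2` and `G` is the internal central product of `n` copies of the
quaternion group of order `8`, then every element of order `4` in `G` fails to commute
with some element of order `2`. -/
theorem stmt10 (G : Type*) [Group G] [Finite G] (n : ℕ) (hn : 2 ≤ n)
    (S : Fin n → Subgroup G) (hcp : IsInternalCentralProduct G n S)
    (hquat : ∀ i, Nonempty (S i ≃* QuaternionGroup 2)) :
    ∀ b : G, orderOf b = 4 → ∃ w : G, orderOf w = 2 ∧ ¬ Commute w b := by
  obtain ⟨htop, hcomm, hinter, hcard⟩ := hcp
  exact stmt10' G n hn S htop hcomm hinter hcard hquat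
end
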